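/- arXiv:2407.05353 — 4 statements merged into one kernel-verified Lean document; each statement's English description precedes it below -/
import Mathlib

section
/- For every γ ∈ ℂ with Re γ > 0 and every T > 0, one has ⟨ψ_T ⊗_{0,1} ψ_T, h_T⟩ = 0 and ⟨ψ_T ⊗_{1,0} ψ_T, h_T⟩ = 0; in particular ⟨ψ_T ⊗_{0,1} ψ_T, h_T⟩ + ⟨ψ_T ⊗_{1,0} ψ_T, h_T⟩ = 0. -/
/-!
`ψ_T` is supported on `{s ≤ t}` and `h_T` on `{t ≤ s}`. For `t ≤ s` the integrand of either
contraction of `ψ_T` with itself lives on the null set `{s}`, so the contraction vanishes there;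
hence the integrands of both inner products vanish identically.
-/

open MeasureTheory

/-- The kernel `ψ_T(t; s) = T^{−1/2} e^{−conj(γ)(t−s)} 1_{0 ≤ s ≤ t ≤ T}`. -/
noncomputable def psiKer (γ : ℂ) (T t s : ℝ) : ℂ :=
  ((Real.sqrt T)⁻¹ : ℝ) * Complex.exp (-(starRingEnd ℂ γ) * ((t : ℂ) - (s : ℂ)))
    * (if 0 ≤ s ∧ s ≤ t ∧ t ≤ T then 1 else 0)

/-- The kernel `h_T(t; s) = T^{−1/2} e^{−γ(s−t)} 1_{0 ≤ t ≤ s ≤ T}`, the reverse complex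
conjugate of `ψ_T`. -/
noncomputable def hKer (γ : ℂ) (T t s : ℝ) : ℂ :=
  ((Real.sqrt T)⁻¹ : ℝ) * Complex.exp (-γ * ((s : ℂ) - (t : ℂ)))
    * (if 0 ≤ t ∧ t ≤ s ∧ s ≤ T then 1 else 0)

/-- The contraction `f ⊗_{0,1} g (t; s) = ∫₀^∞ f(t; v) g(v; s) dv`. -/
noncomputable def contr01 (f g : ℝ → ℝ → ℂ) (t s : ℝ) : ℂ :=
  ∫ v in Set.Ioi (0 : ℝ), f t v * g v s

/-- The contraction `f ⊗_{1,0} g (t; s) = ∫₀^∞ f(u; s) g(t; u) du`. -/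
noncomputable def contr10 (f g : ℝ → ℝ → ℂ) (t s : ℝ) : ℂ :=
  ∫ u in Set.Ioi (0 : ℝ), f u s * g t u

lemma psiKer_eq_zero_of_lt (γ : ℂ) (T : ℝ) {t s : ℝ} (hts : t < s) : psiKer γ T t s = 0 := by
  simp [psiKer, not_le.mpr hts]

lemma hKer_eq_zero_of_lt (γ : ℂ) (T : ℝ) {t s : ℝ} (hst : s < t) : hKer γ T t s = 0 := by
  simp [hKer, not_le.mpr hst]

section Triangular

variable {f g : ℝ → ℝ → ℂ}

lemma contr01_eq_zero_of_le (hf : ∀ ⦃t s⦄, t < s → f t s = 0)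
    (hg : ∀ ⦃t s⦄, t < s → g t s = 0) {t s : ℝ} (hts : t ≤ s) : contr01 f g t s = 0 := by
  refine integral_eq_zero_of_ae ?_
  filter_upwards [Measure.ae_ne _ s] with v hvs
  rw [Pi.zero_apply]
  rcases hvs.lt_or_gt with hvs | hsv
  · rw [hg hvs, mul_zero]
  · rw [hf (hts.trans_lt hsv), zero_mul]

lemma contr10_eq_zero_of_le (hf : ∀ ⦃t s⦄, t < s → f t s = 0)
    (hg : ∀ ⦃t s⦄, t < s → g t s = 0) {t s : ℝ} (hts : t ≤ s) : contr10 f g t s = 0 := by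
  refine integral_eq_zero_of_ae ?_
  filter_upwards [Measure.ae_ne _ s] with u hus
  rw [Pi.zero_apply]
  rcases hus.lt_or_gt with hus | hsu
  · rw [hf hus, zero_mul]
  · rw [hg (hts.trans_lt hsu), mul_zero]

end Triangular

lemma integral_integral_mul_conj_eq_zero {F H : ℝ → ℝ → ℂ} (hF : ∀ ⦃t s⦄, t ≤ s → F t s = 0)
    (hH : ∀ ⦃t s⦄, s < t → H t s = 0) :
    (∫ t in Set.Ioi (0 : ℝ), ∫ s in Set.Ioi (0 : ℝ), F t s * starRingEnd ℂ (H t s)) = 0 := by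
  have h : ∀ t s, F t s * starRingEnd ℂ (H t s) = 0 := fun t s => by
    rcases le_or_gt t s with hts | hst
    · rw [hF hts, zero_mul]
    · rw [hH hst, map_zero, mul_zero]
  simp only [h, integral_zero]

theorem inner_contractions_psiKer_hKer_eq_zero_general (γ : ℂ) (T : ℝ) :
    ((∫ t in Set.Ioi (0 : ℝ), ∫ s in Set.Ioi (0 : ℝ),
          contr01 (psiKer γ T) (psiKer γ T) t s * starRingEnd ℂ (hKer γ T t s)) = 0
        ∧ (∫ t in Set.Ioi (0 : ℝ), ∫ s in Set.Ioi (0 : ℝ),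
          contr10 (psiKer γ T) (psiKer γ T) t s * starRingEnd ℂ (hKer γ T t s)) = 0)
      ∧ (∫ t in Set.Ioi (0 : ℝ), ∫ s in Set.Ioi (0 : ℝ),
            contr01 (psiKer γ T) (psiKer γ T) t s * starRingEnd ℂ (hKer γ T t s))
          + (∫ t in Set.Ioi (0 : ℝ), ∫ s in Set.Ioi (0 : ℝ),
            contr10 (psiKer γ T) (psiKer γ T) t s * starRingEnd ℂ (hKer γ T t s)) = 0 := by
  have hψ : ∀ ⦃t s⦄, t < s → psiKer γ T t s = 0 := fun _ _ => psiKer_eq_zero_of_lt γ T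
  have h01 := integral_integral_mul_conj_eq_zero
    (fun _ _ => contr01_eq_zero_of_le hψ hψ) (fun _ _ => hKer_eq_zero_of_lt γ T)
  have h10 := integral_integral_mul_conj_eq_zero
    (fun _ _ => contr10_eq_zero_of_le hψ hψ) (fun _ _ => hKer_eq_zero_of_lt γ T)
  exact ⟨⟨h01, h10⟩, by rw [h01, h10, add_zero]⟩

/-- For every `γ ∈ ℂ` with `Re γ > 0` and every `T > 0`,
`⟨ψ_T ⊗_{0,1} ψ_T, h_T⟩ = 0` and `⟨ψ_T ⊗_{1,0} ψ_T, h_T⟩ = 0`; in particular their sum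
vanishes. -/
theorem inner_contractions_psiKer_hKer_eq_zero (γ : ℂ) (hγ : 0 < γ.re) (T : ℝ) (hT : 0 < T) :
    ((∫ t in Set.Ioi (0 : ℝ), ∫ s in Set.Ioi (0 : ℝ),
          contr01 (psiKer γ T) (psiKer γ T) t s * starRingEnd ℂ (hKer γ T t s)) = 0
        ∧ (∫ t in Set.Ioi (0 : ℝ), ∫ s in Set.Ioi (0 : ℝ),
          contr10 (psiKer γ T) (psiKer γ T) t s * starRingEnd ℂ (hKer γ T t s)) = 0)
      ∧ (∫ t in Set.Ioi (0 : ℝ), ∫ s in Set.Ioi (0 : ℝ),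
            contr01 (psiKer γ T) (psiKer γ T) t s * starRingEnd ℂ (hKer γ T t s))
          + (∫ t in Set.Ioi (0 : ℝ), ∫ s in Set.Ioi (0 : ℝ),
            contr10 (psiKer γ T) (psiKer γ T) t s * starRingEnd ℂ (hKer γ T t s)) = 0 :=
  inner_contractions_psiKer_hKer_eq_zero_general γ T
end

section
/- Fix γ ∈ ℂ with Re γ > 0. There exist constants 0 < c₁ ≤ c₂ < ∞ and T₀ > 0, depending only on γ, such that for all T ≥ T₀: c₁·T^{−1/2} ≤ |⟨ψ_T ⊗_{0,1} ψ_T, ψ_T⟩ + ⟨ψ_T ⊗_{1,0} ψ_T, ψ_T⟩| ≤ c₂·T^{−1/2}. -/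
open MeasureTheory

/-- The `L²([0,∞)²)` inner product `⟨f, g⟩ = ∫₀^∞ ∫₀^∞ f(t; s) conj(g(t; s)) dt ds`. -/
noncomputable def kerInner (f g : ℝ → ℝ → ℂ) : ℂ :=
  ∫ t in Set.Ioi (0 : ℝ), ∫ s in Set.Ioi (0 : ℝ), f t s * starRingEnd ℂ (g t s)

/-! On the triangle `0 ≤ s ≤ t ≤ T` the contraction `ψ_T ⊗_{0,1} ψ_T` is
`T⁻¹ (t - s) e^{-conj(γ)(t - s)}`, so against `ψ_T` it integrates
`T^{-3/2} (t - s) e^{-2λ(t - s)}` over the triangle; the two contractions of `ψ_T` with itself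
coincide. The sum is therefore `2 T^{-3/2} ∫₀^T ∫₀^t u e^{-2λu} du dt`, and this double integral
equals `T/(4λ²) + O(1)` in closed form. -/

theorem integral_mul_exp_neg_mul {c : ℝ} (hc : c ≠ 0) (t : ℝ) :
    ∫ u in (0 : ℝ)..t, u * Real.exp (-c * u)
      = 1 / c ^ 2 - (t / c + 1 / c ^ 2) * Real.exp (-c * t) := by
  have hderiv (u : ℝ) :
      HasDerivAt (fun u ↦ -(u / c + 1 / c ^ 2) * Real.exp (-c * u)) (u * Real.exp (-c * u)) u := by
    have := (((hasDerivAt_id u).div_const c).add_const (1 / c ^ 2)).neg.mul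
      (((hasDerivAt_id u).const_mul (-c)).exp)
    refine this.congr_deriv ?_
    simp only [id, Pi.neg_apply]
    field_simp
    ring
  rw [intervalIntegral.integral_eq_sub_of_hasDerivAt (fun u _ ↦ hderiv u)
    ((by fun_prop : Continuous fun u ↦ u * Real.exp (-c * u)).intervalIntegrable _ _)]
  simp only [mul_zero, Real.exp_zero]
  ring

theorem integral_integral_mul_exp_neg_mul {c : ℝ} (hc : c ≠ 0) (T : ℝ) :
    ∫ t in (0 : ℝ)..T, ∫ u in (0 : ℝ)..t, u * Real.exp (-c * u)
      = T / c ^ 2 + (T / c ^ 2 + 2 / c ^ 3) * Real.exp (-c * T) - 2 / c ^ 3 := by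
  simp_rw [integral_mul_exp_neg_mul hc]
  have hderiv (t : ℝ) :
      HasDerivAt (fun t ↦ t / c ^ 2 + (t / c ^ 2 + 2 / c ^ 3) * Real.exp (-c * t))
        (1 / c ^ 2 - (t / c + 1 / c ^ 2) * Real.exp (-c * t)) t := by
    have := ((hasDerivAt_id t).div_const (c ^ 2)).add
      ((((hasDerivAt_id t).div_const (c ^ 2)).add_const (2 / c ^ 3)).mul
        (((hasDerivAt_id t).const_mul (-c)).exp))
    refine this.congr_deriv ?_
    simp only [id]
    field_simp
    ring
  rw [intervalIntegral.integral_eq_sub_of_hasDerivAt (fun t _ ↦ hderiv t)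
    ((by fun_prop : Continuous fun t ↦ 1 / c ^ 2 - (t / c + 1 / c ^ 2) * Real.exp (-c * t)
      ).intervalIntegrable _ _)]
  simp

theorem integral_integral_mul_exp_neg_mul_mem_Icc {c T : ℝ} (hc : 0 < c) (hT : 4 / c ≤ T) :
    ∫ t in (0 : ℝ)..T, ∫ u in (0 : ℝ)..t, u * Real.exp (-c * u)
      ∈ Set.Icc (T / (2 * c ^ 2)) (2 * T / c ^ 2) := by
  rw [integral_integral_mul_exp_neg_mul hc.ne']
  have hT0 : 0 < T := (div_pos (by norm_num) hc).trans_le hT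
  have hexp_pos := Real.exp_pos (-c * T)
  have hexp_le : Real.exp (-c * T) ≤ 1 := Real.exp_le_one_iff.mpr (by nlinarith)
  have hcT : 2 / c ^ 3 ≤ T / (2 * c ^ 2) := by
    rw [div_le_div_iff₀ (by positivity) (by positivity)]
    rw [div_le_iff₀ hc] at hT
    nlinarith [pow_pos hc 2]
  have hpos : 0 < T / c ^ 2 + 2 / c ^ 3 := by positivity
  have h1 : T / (2 * c ^ 2) = T / c ^ 2 / 2 := by ring
  have h2 : 2 * T / c ^ 2 = 2 * (T / c ^ 2) := by ring
  constructor
  · nlinarith [mul_pos hpos hexp_pos]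
  · nlinarith [mul_le_of_le_one_right hpos.le hexp_le]

theorem setIntegral_Ioi_triangle {E : Type*} [NormedAddCommGroup E] [NormedSpace ℝ E]
    (g : ℝ → E) {T : ℝ} (hT : 0 ≤ T) :
    ∫ t in Set.Ioi (0 : ℝ), ∫ s in Set.Ioi (0 : ℝ), (if 0 ≤ s ∧ s ≤ t ∧ t ≤ T then g (t - s) else 0)
      = ∫ t in (0 : ℝ)..T, ∫ u in (0 : ℝ)..t, g u := by
  have hinner (t : ℝ) :
      ∫ s in Set.Ioi (0 : ℝ), (if 0 ≤ s ∧ s ≤ t ∧ t ≤ T then g (t - s) else 0)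
        = (Set.Icc 0 T).indicator (fun t ↦ ∫ u in (0 : ℝ)..t, g u) t := by
    by_cases ht : t ∈ Set.Icc 0 T
    · have hcond (s : ℝ) : (if 0 ≤ s ∧ s ≤ t ∧ t ≤ T then g (t - s) else 0)
          = (Set.Icc 0 t).indicator (fun s ↦ g (t - s)) s := by
        simp [Set.indicator, ht.2]
      rw [Set.indicator_of_mem ht, ← integral_Ici_eq_integral_Ioi]
      simp_rw [hcond]
      rw [setIntegral_indicator measurableSet_Icc, Set.inter_eq_right.mpr Set.Icc_subset_Ici_self,
        integral_Icc_eq_integral_Ioc, ← intervalIntegral.integral_of_le ht.1,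
        intervalIntegral.integral_comp_sub_left]
      simp
    · rw [Set.indicator_of_notMem ht]
      refine integral_eq_zero_of_ae (.of_forall fun s ↦ if_neg ?_)
      rintro ⟨hs, hst, htT⟩
      exact ht ⟨hs.trans hst, htT⟩
  simp_rw [hinner]
  rw [← integral_Ici_eq_integral_Ioi, setIntegral_indicator measurableSet_Icc,
    Set.inter_eq_right.mpr Set.Icc_subset_Ici_self, intervalIntegral.integral_of_le hT,
    integral_Icc_eq_integral_Ioc]

theorem Complex.exp_neg_conj_mul_mul_exp_neg_mul (γ : ℂ) (x : ℝ) :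
    Complex.exp (-(starRingEnd ℂ γ) * x) * Complex.exp (-γ * x) = Real.exp (-(2 * γ.re) * x) := by
  rw [← Complex.exp_add, Complex.ofReal_exp]
  congr 1
  have h := Complex.add_conj γ
  push_cast at h ⊢
  linear_combination (-(x : ℂ)) * h

section psiKer

variable {γ : ℂ} {T t s : ℝ}

theorem psiKer_of_mem (h : 0 ≤ s ∧ s ≤ t ∧ t ≤ T) :
    psiKer γ T t s = ((Real.sqrt T)⁻¹ : ℝ) * Complex.exp (-(starRingEnd ℂ γ) * ((t : ℂ) - s)) := by
  simp [psiKer, h]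

theorem psiKer_of_notMem (h : ¬(0 ≤ s ∧ s ≤ t ∧ t ≤ T)) : psiKer γ T t s = 0 := by
  simp [psiKer, h]

theorem psiKer_mul_psiKer (h : 0 ≤ s ∧ s ≤ t ∧ t ≤ T) (v : ℝ) :
    psiKer γ T t v * psiKer γ T v s
      = (Set.Icc s t).indicator
          (fun _ ↦ (T : ℂ)⁻¹ * Complex.exp (-(starRingEnd ℂ γ) * ((t : ℂ) - s))) v := by
  obtain ⟨hs, hst, htT⟩ := h
  by_cases hv : v ∈ Set.Icc s t
  · have hsqrt : (((Real.sqrt T)⁻¹ : ℝ) : ℂ) * ((Real.sqrt T)⁻¹ : ℝ) = (T : ℂ)⁻¹ := by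
      rw [← Complex.ofReal_mul, ← mul_inv, Real.mul_self_sqrt ((hs.trans hst).trans htT),
        Complex.ofReal_inv]
    rw [Set.indicator_of_mem hv, psiKer_of_mem ⟨hs.trans hv.1, hv.2, htT⟩,
      psiKer_of_mem ⟨hs, hv.1, hv.2.trans htT⟩, mul_mul_mul_comm, hsqrt, ← Complex.exp_add]
    ring_nf
  · rw [Set.indicator_of_notMem hv]
    rcases not_and_or.mp hv with hsv | hvt
    · rw [psiKer_of_notMem (γ := γ) (t := v) fun h ↦ hsv h.2.1, mul_zero]
    · rw [psiKer_of_notMem (γ := γ) (s := v) fun h ↦ hvt h.2.1, zero_mul]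

theorem contr01_psiKer_self (h : 0 ≤ s ∧ s ≤ t ∧ t ≤ T) :
    contr01 (psiKer γ T) (psiKer γ T) t s
      = (t - s) * (T : ℂ)⁻¹ * Complex.exp (-(starRingEnd ℂ γ) * ((t : ℂ) - s)) := by
  rw [contr01, ← integral_Ici_eq_integral_Ioi]
  simp_rw [psiKer_mul_psiKer h]
  rw [setIntegral_indicator measurableSet_Icc,
    Set.inter_eq_right.mpr (Set.Icc_subset_Ici_iff h.2.1 |>.mpr h.1), setIntegral_const,
    measureReal_def, Real.volume_Icc, ENNReal.toReal_ofReal (sub_nonneg.mpr h.2.1),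
    Complex.real_smul]
  push_cast
  ring

theorem contr01_psiKer_self_mul_conj :
    contr01 (psiKer γ T) (psiKer γ T) t s * starRingEnd ℂ (psiKer γ T t s)
      = if 0 ≤ s ∧ s ≤ t ∧ t ≤ T then
          (((Real.sqrt T)⁻¹ * T⁻¹ * ((t - s) * Real.exp (-(2 * γ.re) * (t - s))) : ℝ) : ℂ)
        else 0 := by
  by_cases h : 0 ≤ s ∧ s ≤ t ∧ t ≤ T
  · rw [if_pos h, contr01_psiKer_self h, psiKer_of_mem h, map_mul, ← Complex.exp_conj,
      Complex.conj_ofReal]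
    have := Complex.exp_neg_conj_mul_mul_exp_neg_mul γ (t - s)
    push_cast at this ⊢
    simp only [map_mul, map_neg, map_sub, Complex.conj_conj, Complex.conj_ofReal]
    linear_combination ((Real.sqrt T : ℂ)⁻¹ * (T : ℂ)⁻¹ * (t - s)) * this
  · rw [if_neg h, psiKer_of_notMem h, map_zero, mul_zero]

end psiKer

theorem contr10_self (f : ℝ → ℝ → ℂ) : contr10 f f = contr01 f f := by
  ext t s
  simp only [contr10, contr01, mul_comm]

theorem kerInner_contr01_psiKer_self {γ : ℂ} {T : ℝ} (hT : 0 ≤ T) :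
    kerInner (contr01 (psiKer γ T) (psiKer γ T)) (psiKer γ T)
      = (((Real.sqrt T)⁻¹ * T⁻¹ *
          ∫ t in (0 : ℝ)..T, ∫ u in (0 : ℝ)..t, u * Real.exp (-(2 * γ.re) * u) : ℝ) : ℂ) := by
  simp_rw [kerInner, contr01_psiKer_self_mul_conj]
  refine (setIntegral_Ioi_triangle
    (fun u ↦ (((Real.sqrt T)⁻¹ * T⁻¹ * (u * Real.exp (-(2 * γ.re) * u)) : ℝ) : ℂ)) hT).trans ?_
  simp_rw [intervalIntegral.integral_ofReal, intervalIntegral.integral_const_mul]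

/-- For `γ ∈ ℂ` with `Re γ > 0` there are constants `0 < c₁ ≤ c₂ < ∞` and
`T₀ > 0`, depending only on `γ`, such that for all `T ≥ T₀`,
`c₁ T^{−1/2} ≤ |⟨ψ_T ⊗_{0,1} ψ_T, ψ_T⟩ + ⟨ψ_T ⊗_{1,0} ψ_T, ψ_T⟩| ≤ c₂ T^{−1/2}`. -/
theorem third_moment_bounds (γ : ℂ) (hγ : 0 < γ.re) :
    ∃ c₁ c₂ T₀ : ℝ, 0 < c₁ ∧ c₁ ≤ c₂ ∧ 0 < T₀ ∧ ∀ T, T₀ ≤ T →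
      c₁ / Real.sqrt T
          ≤ ‖kerInner (contr01 (psiKer γ T) (psiKer γ T)) (psiKer γ T)
              + kerInner (contr10 (psiKer γ T) (psiKer γ T)) (psiKer γ T)‖
        ∧ ‖kerInner (contr01 (psiKer γ T) (psiKer γ T)) (psiKer γ T)
              + kerInner (contr10 (psiKer γ T) (psiKer γ T)) (psiKer γ T)‖
          ≤ c₂ / Real.sqrt T := by
  set c := 2 * γ.re with hc_def
  have hc : 0 < c := by positivity
  refine ⟨1 / c ^ 2, 4 / c ^ 2, 4 / c, by positivity, by gcongr; norm_num, by positivity, ?_⟩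
  intro T hT
  have hT0 : 0 < T := (div_pos (by norm_num) hc).trans_le hT
  have hK := kerInner_contr01_psiKer_self (γ := γ) hT0.le
  rw [← hc_def] at hK
  obtain ⟨hXlo, hXhi⟩ := integral_integral_mul_exp_neg_mul_mem_Icc hc hT
  set X := ∫ t in (0 : ℝ)..T, ∫ u in (0 : ℝ)..t, u * Real.exp (-c * u)
  have hnorm : ‖kerInner (contr01 (psiKer γ T) (psiKer γ T)) (psiKer γ T)
      + kerInner (contr10 (psiKer γ T) (psiKer γ T)) (psiKer γ T)‖ = 2 * X / T / Real.sqrt T := by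
    have hX : 0 ≤ X := (by positivity : (0 : ℝ) ≤ T / (2 * c ^ 2)).trans hXlo
    rw [contr10_self, hK, ← two_mul, ← Complex.ofReal_ofNat, ← Complex.ofReal_mul,
      Complex.norm_real, Real.norm_of_nonneg (by positivity)]
    ring
  have hlo : 1 / c ^ 2 ≤ 2 * X / T := by
    rw [le_div_iff₀ hT0]
    linarith [show 1 / c ^ 2 * T = 2 * (T / (2 * c ^ 2)) by field_simp]
  have hhi : 2 * X / T ≤ 4 / c ^ 2 := by
    rw [div_le_iff₀ hT0]
    linarith [show 4 / c ^ 2 * T = 2 * (2 * T / c ^ 2) by field_simp; ring]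
  rw [hnorm]
  exact ⟨by gcongr, by gcongr⟩
end

section
/- Fix γ ∈ ℂ with Re γ > 0. There exist constants 0 < c₁ ≤ c₂ < ∞ and T₀ > 0, depending only on γ, such that for all T ≥ T₀: c₁·T^{−1} ≤ ‖ψ_T ⊗_{0,1} h_T‖² + ‖ψ_T ⊗_{1,0} h_T‖² ≤ c₂·T^{−1}. -/
open MeasureTheory

/-- The squared `L²([0,∞)²)` norm `‖f‖² = ∫₀^∞ ∫₀^∞ |f(t; s)|² dt ds`. -/
noncomputable def kerNormSq (f : ℝ → ℝ → ℂ) : ℝ :=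
  ∫ t in Set.Ioi (0 : ℝ), ∫ s in Set.Ioi (0 : ℝ), ‖f t s‖ ^ 2

/-! The integrands of both contractions have constant phase: for `0 < t, s ≤ T`,
`ψ_T(t; v) h_T(v; s) = T⁻¹ e^{-γ̄ t - γ s} e^{2λv}` on `0 ≤ v ≤ min t s` and
`ψ_T(u; s) h_T(t; u) = T⁻¹ e^{γ̄ s + γ t} e^{-2λu}` on `max t s ≤ u ≤ T`, so the moduli of the
contractions are the explicit real integrals
`(e^{-λ|t-s|} - e^{-λ(t+s)}) / (2λT)` and `(e^{-λ|t-s|} - e^{-λ(2T-t-s)}) / (2λT)`.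
Both are at most `e^{-λ|t-s|} / (2λT)` and vanish for `t > T`, so each squared norm is at most
`T · (2λT)⁻² / λ`. The first is at least `(e^{-λ} - e^{-3λ}) / (2λT)` on the strip
`2 < t ≤ T`, `t - 1 < s ≤ t` of area `T - 2`, which gives the lower bound of order `T⁻¹`. -/

open Set Real

lemma integral_exp_mul_Ioc {c : ℝ} (hc : c ≠ 0) {a b : ℝ} (hab : a ≤ b) :
    ∫ x in Ioc a b, rexp (c * x) = (rexp (c * b) - rexp (c * a)) / c := by
  rw [← intervalIntegral.integral_of_le hab, intervalIntegral.integral_comp_mul_left rexp hc,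
    integral_exp, smul_eq_mul, inv_mul_eq_div]

lemma integrable_exp_neg_mul_abs {c : ℝ} (hc : 0 < c) :
    Integrable fun x : ℝ => rexp (-(c * |x|)) := by
  have hIic : IntegrableOn (fun x : ℝ => rexp (-(c * |x|))) (Iic 0) :=
    (integrableOn_exp_mul_Iic hc 0).congr_fun
      (fun x hx => by simp [abs_of_nonpos (mem_Iic.mp hx)]) measurableSet_Iic
  have hIoi : IntegrableOn (fun x : ℝ => rexp (-(c * |x|))) (Ioi 0) :=
    (integrableOn_exp_mul_Ioi (neg_neg_of_pos hc) 0).congr_fun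
      (fun x hx => by simp [abs_of_pos (mem_Ioi.mp hx)]) measurableSet_Ioi
  simpa using hIic.union hIoi

lemma integral_exp_neg_mul_abs {c : ℝ} (hc : 0 < c) :
    ∫ x : ℝ, rexp (-(c * |x|)) = 2 / c := by
  rw [integral_comp_abs (f := fun x => rexp (-(c * x)))]
  simp_rw [← neg_mul]
  rw [integral_exp_mul_Ioi (neg_neg_of_pos hc)]
  field_simp
  simp

lemma setIntegral_exp_neg_mul_abs_sub_le {c : ℝ} (hc : 0 < c) (t : ℝ) (s : Set ℝ) :
    ∫ x in s, rexp (-(c * |t - x|)) ≤ 2 / c := by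
  rw [← integral_exp_neg_mul_abs hc,
    ← integral_sub_left_eq_self (fun x => rexp (-(c * |x|))) volume t]
  exact setIntegral_le_integral ((integrable_exp_neg_mul_abs hc).comp_sub_left t)
    (Filter.Eventually.of_forall fun _ => (exp_pos _).le)

lemma integrableOn_const_mul_exp_neg_abs_sub (c : ℝ) {l : ℝ} (hl : 0 < l) (t : ℝ) :
    IntegrableOn (fun s => c * rexp (-(l * |t - s|))) (Ioi 0) :=
  (((integrable_exp_neg_mul_abs hl).comp_sub_left t).const_mul c).integrableOn

lemma setIntegral_Ioc_const (a b c : ℝ) (hab : a ≤ b) : ∫ _ in Ioc a b, c = c * (b - a) := by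
  rw [setIntegral_const, Real.volume_real_Ioc_of_le hab, smul_eq_mul, mul_comm]

lemma integral_indicator_Ioc_const {T : ℝ} (hT : 0 ≤ T) (c : ℝ) :
    ∫ t in Ioi 0, (Ioc 0 T).indicator (fun _ => c) t = c * T := by
  rw [setIntegral_indicator measurableSet_Ioc, inter_eq_right.mpr Ioc_subset_Ioi_self,
    setIntegral_const, Real.volume_real_Ioc_of_le hT, sub_zero, smul_eq_mul, mul_comm]

lemma integrableOn_indicator_Ioc_const (T c : ℝ) :
    IntegrableOn ((Ioc 0 T).indicator fun _ => c) (Ioi 0) :=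
  ((integrable_indicator_iff measurableSet_Ioc).mpr
    (integrableOn_const measure_Ioc_lt_top.ne)).integrableOn

lemma norm_integral_mul_ofReal {α : Type*} [MeasurableSpace α] {μ : Measure α} (c : ℂ)
    {r : α → ℝ} (hr : ∀ x, 0 ≤ r x) :
    ‖∫ x, c * (r x : ℂ) ∂μ‖ = ‖c‖ * ∫ x, r x ∂μ := by
  rw [integral_const_mul, integral_complex_ofReal, norm_mul, Complex.norm_real,
    Real.norm_of_nonneg (integral_nonneg hr)]

lemma kerNormSq_nonneg (F : ℝ → ℝ → ℂ) : 0 ≤ kerNormSq F :=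
  integral_nonneg fun _ => integral_nonneg fun _ => sq_nonneg _

lemma measurable_uncurry_contr01 {f g : ℝ → ℝ → ℂ} (hf : Measurable (Function.uncurry f))
    (hg : Measurable (Function.uncurry g)) : Measurable (Function.uncurry (contr01 f g)) := by
  have h : Measurable fun q : (ℝ × ℝ) × ℝ => f q.1.1 q.2 * g q.2 q.1.2 :=
    (hf.comp (measurable_fst.fst.prodMk measurable_snd)).mul
      (hg.comp (measurable_snd.prodMk measurable_fst.snd))
  exact (h.stronglyMeasurable.integral_prod_right' (ν := volume.restrict (Ioi 0))).measurable

section DecayingKernel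

variable {F : ℝ → ℝ → ℂ} {C l T : ℝ}

lemma sq_norm_le_of_decay (hdecay : ∀ t > 0, ∀ s > 0, ‖F t s‖ ≤ C * rexp (-(l * |t - s|)))
    {t s : ℝ} (ht : 0 < t) (hs : 0 < s) :
    ‖F t s‖ ^ 2 ≤ C ^ 2 * rexp (-(2 * l * |t - s|)) := by
  calc ‖F t s‖ ^ 2 ≤ (C * rexp (-(l * |t - s|))) ^ 2 :=
        pow_le_pow_left₀ (norm_nonneg _) (hdecay t ht s hs) 2
    _ = C ^ 2 * rexp (-(2 * l * |t - s|)) := by rw [mul_pow, ← exp_nat_mul]; ring_nf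

lemma integral_sq_norm_le_indicator (hl : 0 < l)
    (hdecay : ∀ t > 0, ∀ s > 0, ‖F t s‖ ≤ C * rexp (-(l * |t - s|)))
    (hsupp : ∀ t > T, ∀ s, F t s = 0) {t : ℝ} (ht : 0 < t) :
    ∫ s in Ioi 0, ‖F t s‖ ^ 2 ≤ (Ioc 0 T).indicator (fun _ => C ^ 2 / l) t := by
  by_cases htT : t ≤ T
  · rw [indicator_of_mem (show t ∈ Ioc 0 T from ⟨ht, htT⟩)]
    calc ∫ s in Ioi 0, ‖F t s‖ ^ 2 ≤ ∫ s in Ioi 0, C ^ 2 * rexp (-(2 * l * |t - s|)) :=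
          integral_mono_of_nonneg (Filter.Eventually.of_forall fun _ => sq_nonneg _)
            (integrableOn_const_mul_exp_neg_abs_sub (C ^ 2) (mul_pos two_pos hl) t)
            (ae_restrict_of_forall_mem measurableSet_Ioi fun s hs =>
              sq_norm_le_of_decay hdecay ht hs)
      _ ≤ C ^ 2 * (2 / (2 * l)) := by
          rw [integral_const_mul]
          exact mul_le_mul_of_nonneg_left
            (setIntegral_exp_neg_mul_abs_sub_le (by positivity) t _) (sq_nonneg C)
      _ = C ^ 2 / l := by field_simp
  · rw [indicator_of_notMem (fun h => htT h.2)]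
    simp [hsupp t (not_le.mp htT)]

theorem kerNormSq_le_of_decay (hl : 0 < l) (hT : 0 ≤ T)
    (hdecay : ∀ t > 0, ∀ s > 0, ‖F t s‖ ≤ C * rexp (-(l * |t - s|)))
    (hsupp : ∀ t > T, ∀ s, F t s = 0) :
    kerNormSq F ≤ C ^ 2 * T / l := by
  calc kerNormSq F ≤ ∫ t in Ioi 0, (Ioc 0 T).indicator (fun _ => C ^ 2 / l) t :=
        integral_mono_of_nonneg
          (Filter.Eventually.of_forall fun _ => integral_nonneg fun _ => sq_nonneg _)
          (integrableOn_indicator_Ioc_const T _)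
          (ae_restrict_of_forall_mem measurableSet_Ioi fun t ht =>
            integral_sq_norm_le_indicator hl hdecay hsupp ht)
    _ = C ^ 2 * T / l := by rw [integral_indicator_Ioc_const hT]; ring

lemma integrableOn_sq_norm_of_decay (hmeas : Measurable (Function.uncurry F)) (hl : 0 < l)
    (hdecay : ∀ t > 0, ∀ s > 0, ‖F t s‖ ≤ C * rexp (-(l * |t - s|))) {t : ℝ} (ht : 0 < t) :
    IntegrableOn (fun s => ‖F t s‖ ^ 2) (Ioi 0) :=
  Integrable.mono' (integrableOn_const_mul_exp_neg_abs_sub (C ^ 2) (mul_pos two_pos hl) t)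
    ((hmeas.comp measurable_prodMk_left).norm.pow_const 2).aestronglyMeasurable
    (ae_restrict_of_forall_mem measurableSet_Ioi fun s hs => by
      simpa using sq_norm_le_of_decay hdecay ht hs)

lemma integrableOn_integral_sq_norm_of_decay (hmeas : Measurable (Function.uncurry F))
    (hl : 0 < l) (hdecay : ∀ t > 0, ∀ s > 0, ‖F t s‖ ≤ C * rexp (-(l * |t - s|)))
    (hsupp : ∀ t > T, ∀ s, F t s = 0) :
    IntegrableOn (fun t => ∫ s in Ioi 0, ‖F t s‖ ^ 2) (Ioi 0) :=
  Integrable.mono' (integrableOn_indicator_Ioc_const T (C ^ 2 / l))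
    ((hmeas.norm.pow_const 2).stronglyMeasurable.integral_prod_right'
      (f := fun p : ℝ × ℝ => ‖F p.1 p.2‖ ^ 2)).aestronglyMeasurable
    (ae_restrict_of_forall_mem measurableSet_Ioi fun t ht => by
      rw [Real.norm_of_nonneg (integral_nonneg fun _ => sq_nonneg _)]
      exact integral_sq_norm_le_indicator hl hdecay hsupp ht)

theorem le_kerNormSq_of_decay (hmeas : Measurable (Function.uncurry F)) (hl : 0 < l)
    (hdecay : ∀ t > 0, ∀ s > 0, ‖F t s‖ ≤ C * rexp (-(l * |t - s|)))
    (hsupp : ∀ t > T, ∀ s, F t s = 0) {a c : ℝ} (ha : 1 ≤ a) (haT : a ≤ T)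
    (hlow : ∀ t ∈ Ioc a T, ∀ s ∈ Ioc (t - 1) t, c ≤ ‖F t s‖ ^ 2) :
    c * (T - a) ≤ kerNormSq F := by
  have hstrip : ∀ t ∈ Ioc a T, c ≤ ∫ s in Ioi 0, ‖F t s‖ ^ 2 := fun t ht => by
    have hsub : Ioc (t - 1) t ⊆ Ioi 0 := fun s hs => mem_Ioi.mpr (by linarith [hs.1, ht.1])
    have hinner := integrableOn_sq_norm_of_decay hmeas hl hdecay (by linarith [ht.1] : 0 < t)
    calc c = ∫ _ in Ioc (t - 1) t, c := by rw [setIntegral_Ioc_const _ _ _ (by linarith)]; ring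
      _ ≤ ∫ s in Ioc (t - 1) t, ‖F t s‖ ^ 2 :=
          setIntegral_mono_on (integrableOn_const measure_Ioc_lt_top.ne)
            (hinner.mono_set hsub) measurableSet_Ioc (hlow t ht)
      _ ≤ ∫ s in Ioi 0, ‖F t s‖ ^ 2 :=
          setIntegral_mono_set hinner (Filter.Eventually.of_forall fun _ => sq_nonneg _)
            hsub.eventuallyLE
  have hsub : Ioc a T ⊆ Ioi 0 := fun t ht => mem_Ioi.mpr (by linarith [ht.1])
  have houter := integrableOn_integral_sq_norm_of_decay hmeas hl hdecay hsupp
  calc c * (T - a) = ∫ _ in Ioc a T, c := (setIntegral_Ioc_const _ _ _ haT).symm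
    _ ≤ ∫ t in Ioc a T, ∫ s in Ioi 0, ‖F t s‖ ^ 2 :=
        setIntegral_mono_on (integrableOn_const measure_Ioc_lt_top.ne)
          (houter.mono_set hsub) measurableSet_Ioc hstrip
    _ ≤ kerNormSq F :=
        setIntegral_mono_set houter
          (Filter.Eventually.of_forall fun _ => integral_nonneg fun _ => sq_nonneg _)
          hsub.eventuallyLE

end DecayingKernel

lemma ofReal_inv_sqrt_mul_self {T : ℝ} (hT : 0 ≤ T) :
    (((√T)⁻¹ : ℝ) : ℂ) * (((√T)⁻¹ : ℝ) : ℂ) = (T : ℂ)⁻¹ := by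
  rw [← Complex.ofReal_mul, ← mul_inv, Real.mul_self_sqrt hT, Complex.ofReal_inv]

section Kernels

variable {γ : ℂ} {T : ℝ}

lemma measurable_uncurry_psiKer : Measurable (Function.uncurry (psiKer γ T)) := by
  refine Measurable.mul (by fun_prop) (Measurable.ite ?_ measurable_const measurable_const)
  exact (measurableSet_le measurable_const measurable_snd).inter
    ((measurableSet_le measurable_snd measurable_fst).inter
      (measurableSet_le measurable_fst measurable_const))

lemma measurable_uncurry_hKer : Measurable (Function.uncurry (hKer γ T)) := by
  refine Measurable.mul (by fun_prop) (Measurable.ite ?_ measurable_const measurable_const)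
  exact (measurableSet_le measurable_const measurable_fst).inter
    ((measurableSet_le measurable_fst measurable_snd).inter
      (measurableSet_le measurable_snd measurable_const))

lemma psiKer_mul_hKer_of_pos {t s v : ℝ} (htT : t ≤ T) (hsT : s ≤ T) (hv : 0 < v) :
    psiKer γ T t v * hKer γ T v s
      = (T : ℂ)⁻¹ * Complex.exp (-(starRingEnd ℂ γ) * t - γ * s)
        * ((Iic (min t s)).indicator (fun v => rexp (2 * γ.re * v)) v : ℝ) := by
  by_cases hvm : v ∈ Iic (min t s)
  · obtain ⟨hvt, hvs⟩ := le_min_iff.mp (mem_Iic.mp hvm)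
    rw [indicator_of_mem hvm, psiKer, hKer,
      if_pos ⟨hv.le, hvt, htT⟩, if_pos ⟨hv.le, hvs, hsT⟩, mul_one, mul_one, mul_mul_mul_comm,
      ofReal_inv_sqrt_mul_self (by linarith), Complex.ofReal_exp, mul_assoc, ← Complex.exp_add,
      ← Complex.exp_add]
    congr 2
    have h := Complex.add_conj γ
    push_cast at h ⊢
    linear_combination (v : ℂ) * h
  · rw [indicator_of_notMem hvm, Complex.ofReal_zero, mul_zero]
    rcases min_lt_iff.mp (not_le.mp (mt mem_Iic.mpr hvm)) with h | h
    · rw [psiKer, if_neg fun h' => h.not_ge h'.2.1, mul_zero, zero_mul]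
    · rw [hKer, if_neg fun h' => h.not_ge h'.2.1, mul_zero, mul_zero]

lemma psiKer_mul_hKer_of_nonneg {t s u : ℝ} (ht : 0 ≤ t) (hs : 0 ≤ s) :
    psiKer γ T u s * hKer γ T t u
      = (T : ℂ)⁻¹ * Complex.exp (starRingEnd ℂ γ * s + γ * t)
        * ((Icc (max t s) T).indicator (fun u => rexp (-(2 * γ.re) * u)) u : ℝ) := by
  by_cases hu : u ∈ Icc (max t s) T
  · obtain ⟨htu, hsu⟩ := max_le_iff.mp hu.1
    rw [indicator_of_mem hu, psiKer, hKer,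
      if_pos ⟨hs, hsu, hu.2⟩, if_pos ⟨ht, htu, hu.2⟩, mul_one, mul_one, mul_mul_mul_comm,
      ofReal_inv_sqrt_mul_self (by linarith [hu.2]), Complex.ofReal_exp, mul_assoc,
      ← Complex.exp_add, ← Complex.exp_add]
    congr 2
    have h := Complex.add_conj γ
    push_cast at h ⊢
    linear_combination -(u : ℂ) * h
  · rw [indicator_of_notMem hu, Complex.ofReal_zero, mul_zero]
    rw [mem_Icc, max_le_iff, not_and_or, not_and_or] at hu
    rcases hu with (h | h) | h
    · rw [hKer, if_neg fun h' => h h'.2.1, mul_zero, mul_zero]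
    · rw [psiKer, if_neg fun h' => h h'.2.1, mul_zero, zero_mul]
    · rw [psiKer, if_neg fun h' => h h'.2.2, mul_zero, zero_mul]

theorem norm_contr01_psiKer_hKer (hγ : γ.re ≠ 0) {t s : ℝ} (ht : 0 < t) (hs : 0 < s)
    (htT : t ≤ T) (hsT : s ≤ T) :
    ‖contr01 (psiKer γ T) (hKer γ T) t s‖
      = (rexp (-(γ.re * |t - s|)) - rexp (-(γ.re * (t + s)))) / (2 * γ.re * T) := by
  have hT : 0 < T := ht.trans_le htT
  have hm : 0 ≤ min t s := le_min ht.le hs.le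
  have hexp :
      rexp (2 * γ.re * min t s) * rexp (-(γ.re * (t + s))) = rexp (-(γ.re * |t - s|)) := by
    rw [← exp_add]
    congr 1
    linear_combination γ.re * min_add_max t s - γ.re * max_sub_min_eq_abs' t s
  calc ‖contr01 (psiKer γ T) (hKer γ T) t s‖
      = ‖∫ v in Ioi 0, (T : ℂ)⁻¹ * Complex.exp (-(starRingEnd ℂ γ) * t - γ * s)
          * ((Iic (min t s)).indicator (fun v => rexp (2 * γ.re * v)) v : ℝ)‖ := by
        rw [contr01, setIntegral_congr_fun measurableSet_Ioi fun v hv =>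
          psiKer_mul_hKer_of_pos htT hsT hv]
    _ = T⁻¹ * rexp (-(γ.re * (t + s))) * ((rexp (2 * γ.re * min t s) - 1) / (2 * γ.re)) := by
        rw [norm_integral_mul_ofReal _ (indicator_nonneg fun _ _ => (exp_pos _).le),
          setIntegral_indicator measurableSet_Iic, Ioi_inter_Iic,
          integral_exp_mul_Ioc (mul_ne_zero two_ne_zero hγ) hm, norm_mul, norm_inv,
          Complex.norm_real, Real.norm_of_nonneg hT.le, Complex.norm_exp, mul_zero, exp_zero]
        congr 3
        simp only [Complex.sub_re, Complex.neg_re, Complex.mul_re, Complex.conj_re,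
          Complex.ofReal_re, Complex.ofReal_im, mul_zero, sub_zero]
        ring
    _ = _ := by
        rw [← hexp]
        field_simp

theorem norm_contr10_psiKer_hKer (hγ : γ.re ≠ 0) {t s : ℝ} (ht : 0 < t) (hs : 0 < s)
    (htT : t ≤ T) (hsT : s ≤ T) :
    ‖contr10 (psiKer γ T) (hKer γ T) t s‖
      = (rexp (-(γ.re * |t - s|)) - rexp (-(γ.re * (2 * T - t - s)))) / (2 * γ.re * T) := by
  have hT : 0 < T := ht.trans_le htT
  have hM : 0 < max t s := lt_max_of_lt_left ht
  have hexp : rexp (-(2 * γ.re) * max t s) * rexp (γ.re * (t + s))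
      = rexp (-(γ.re * |t - s|)) := by
    rw [← exp_add]
    congr 1
    linear_combination -γ.re * min_add_max t s - γ.re * max_sub_min_eq_abs' t s
  have hexpT : rexp (-(2 * γ.re) * T) * rexp (γ.re * (t + s))
      = rexp (-(γ.re * (2 * T - t - s))) := by
    rw [← exp_add]
    ring_nf
  calc ‖contr10 (psiKer γ T) (hKer γ T) t s‖
      = ‖∫ u in Ioi 0, (T : ℂ)⁻¹ * Complex.exp (starRingEnd ℂ γ * s + γ * t)
          * ((Icc (max t s) T).indicator (fun u => rexp (-(2 * γ.re) * u)) u : ℝ)‖ := by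
        simp only [contr10, psiKer_mul_hKer_of_nonneg ht.le hs.le]
    _ = T⁻¹ * rexp (γ.re * (t + s))
          * ((rexp (-(2 * γ.re) * T) - rexp (-(2 * γ.re) * max t s)) / (-(2 * γ.re))) := by
        rw [norm_integral_mul_ofReal _ (indicator_nonneg fun _ _ => (exp_pos _).le),
          setIntegral_indicator measurableSet_Icc,
          inter_eq_right.mpr (Icc_subset_Ioi_iff (max_le htT hsT) |>.mpr hM),
          integral_Icc_eq_integral_Ioc,
          integral_exp_mul_Ioc (neg_ne_zero.mpr (mul_ne_zero two_ne_zero hγ)) (max_le htT hsT),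
          norm_mul, norm_inv, Complex.norm_real, Real.norm_of_nonneg hT.le, Complex.norm_exp]
        congr 3
        simp only [Complex.add_re, Complex.mul_re, Complex.conj_re, Complex.conj_im,
          Complex.ofReal_re, Complex.ofReal_im, mul_zero, sub_zero]
        ring
    _ = _ := by
        rw [← hexp, ← hexpT]
        field_simp
        ring

lemma contr01_psiKer_hKer_eq_zero {t s : ℝ} (h : T < t ∨ T < s) :
    contr01 (psiKer γ T) (hKer γ T) t s = 0 := by
  have hzero : ∀ v, psiKer γ T t v * hKer γ T v s = 0 := fun v => by
    rcases h with h | h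
    · rw [psiKer, if_neg fun h' => h.not_ge h'.2.2, mul_zero, zero_mul]
    · rw [hKer, if_neg fun h' => h.not_ge h'.2.2, mul_zero, mul_zero]
  simp only [contr01, hzero, integral_zero]

lemma contr10_psiKer_hKer_eq_zero {t s : ℝ} (h : T < t ∨ T < s) :
    contr10 (psiKer γ T) (hKer γ T) t s = 0 := by
  have hzero : ∀ u, psiKer γ T u s * hKer γ T t u = 0 := fun u => by
    rcases h with h | h
    · rw [hKer, if_neg fun h' => h.not_ge (h'.2.1.trans h'.2.2), mul_zero, mul_zero]
    · rw [psiKer, if_neg fun h' => h.not_ge (h'.2.1.trans h'.2.2), mul_zero, zero_mul]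
  simp only [contr10, hzero, integral_zero]

lemma norm_contr01_psiKer_hKer_le (hγ : 0 < γ.re) (hT : 0 ≤ T) {t s : ℝ} (ht : 0 < t)
    (hs : 0 < s) :
    ‖contr01 (psiKer γ T) (hKer γ T) t s‖ ≤ (2 * γ.re * T)⁻¹ * rexp (-(γ.re * |t - s|)) := by
  by_cases h : t ≤ T ∧ s ≤ T
  · rw [norm_contr01_psiKer_hKer hγ.ne' ht hs h.1 h.2, inv_mul_eq_div]
    exact div_le_div_of_nonneg_right (sub_le_self _ (exp_pos _).le) (by positivity)
  · rw [contr01_psiKer_hKer_eq_zero (by rw [not_and_or, not_le, not_le] at h; exact h),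
      norm_zero]
    positivity

lemma norm_contr10_psiKer_hKer_le (hγ : 0 < γ.re) (hT : 0 ≤ T) {t s : ℝ} (ht : 0 < t)
    (hs : 0 < s) :
    ‖contr10 (psiKer γ T) (hKer γ T) t s‖ ≤ (2 * γ.re * T)⁻¹ * rexp (-(γ.re * |t - s|)) := by
  by_cases h : t ≤ T ∧ s ≤ T
  · rw [norm_contr10_psiKer_hKer hγ.ne' ht hs h.1 h.2, inv_mul_eq_div]
    exact div_le_div_of_nonneg_right (sub_le_self _ (exp_pos _).le) (by positivity)
  · rw [contr10_psiKer_hKer_eq_zero (by rw [not_and_or, not_le, not_le] at h; exact h),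
      norm_zero]
    positivity

lemma sq_le_sq_norm_contr01_psiKer_hKer (hγ : 0 < γ.re) {t s : ℝ} (ht : 2 < t) (htT : t ≤ T)
    (hs : s ∈ Ioc (t - 1) t) :
    ((rexp (-γ.re) - rexp (-(3 * γ.re))) / (2 * γ.re * T)) ^ 2
      ≤ ‖contr01 (psiKer γ T) (hKer γ T) t s‖ ^ 2 := by
  obtain ⟨hs₁, hs₂⟩ := hs
  rw [norm_contr01_psiKer_hKer hγ.ne' (by linarith) (by linarith) htT (hs₂.trans htT)]
  have hnear : rexp (-γ.re) ≤ rexp (-(γ.re * |t - s|)) :=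
    exp_le_exp.mpr (by rw [abs_of_nonneg (by linarith)]; nlinarith)
  have hfar : rexp (-(γ.re * (t + s))) ≤ rexp (-(3 * γ.re)) := exp_le_exp.mpr (by nlinarith)
  have hgap : 0 ≤ rexp (-γ.re) - rexp (-(3 * γ.re)) :=
    sub_nonneg.mpr (exp_le_exp.mpr (by linarith))
  have hden : 0 < 2 * γ.re * T := mul_pos (mul_pos two_pos hγ) (by linarith)
  gcongr

theorem kerNormSq_contr01_psiKer_hKer_le (hγ : 0 < γ.re) (hT : 0 < T) :
    kerNormSq (contr01 (psiKer γ T) (hKer γ T)) ≤ 1 / (4 * γ.re ^ 3 * T) := by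
  refine (kerNormSq_le_of_decay hγ hT.le
    (fun t ht s hs => norm_contr01_psiKer_hKer_le hγ hT.le ht hs)
    (fun t ht s => contr01_psiKer_hKer_eq_zero (Or.inl ht))).trans_eq ?_
  field_simp
  ring

theorem kerNormSq_contr10_psiKer_hKer_le (hγ : 0 < γ.re) (hT : 0 < T) :
    kerNormSq (contr10 (psiKer γ T) (hKer γ T)) ≤ 1 / (4 * γ.re ^ 3 * T) := by
  refine (kerNormSq_le_of_decay hγ hT.le
    (fun t ht s hs => norm_contr10_psiKer_hKer_le hγ hT.le ht hs)
    (fun t ht s => contr10_psiKer_hKer_eq_zero (Or.inl ht))).trans_eq ?_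
  field_simp
  ring

theorem le_kerNormSq_contr01_psiKer_hKer (hγ : 0 < γ.re) (hT : 4 ≤ T) :
    ((rexp (-γ.re) - rexp (-(3 * γ.re))) / (2 * γ.re)) ^ 2 / (2 * T)
      ≤ kerNormSq (contr01 (psiKer γ T) (hKer γ T)) := by
  have hT0 : 0 < T := by linarith
  refine le_trans ?_ (le_kerNormSq_of_decay
    (measurable_uncurry_contr01 measurable_uncurry_psiKer measurable_uncurry_hKer) hγ
    (fun t ht s hs => norm_contr01_psiKer_hKer_le hγ hT0.le ht hs)
    (fun t ht s => contr01_psiKer_hKer_eq_zero (Or.inl ht)) one_le_two (by linarith)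
    (fun t ht s hs => sq_le_sq_norm_contr01_psiKer_hKer hγ ht.1 ht.2 hs))
  have hsplit : ((rexp (-γ.re) - rexp (-(3 * γ.re))) / (2 * γ.re * T)) ^ 2 * (T - 2)
      = ((rexp (-γ.re) - rexp (-(3 * γ.re))) / (2 * γ.re)) ^ 2 / (2 * T)
        * (2 * (T - 2) / T) := by
    field_simp
  rw [hsplit]
  exact le_mul_of_one_le_right (by positivity) ((one_le_div hT0).mpr (by linarith))

end Kernels

/-- For `γ ∈ ℂ` with `Re γ > 0` there are constants `0 < c₁ ≤ c₂ < ∞` and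
`T₀ > 0`, depending only on `γ`, such that for all `T ≥ T₀`,
`c₁ T⁻¹ ≤ ‖ψ_T ⊗_{0,1} h_T‖² + ‖ψ_T ⊗_{1,0} h_T‖² ≤ c₂ T⁻¹`. -/
theorem contraction_normSq_bounds (γ : ℂ) (hγ : 0 < γ.re) :
    ∃ c₁ c₂ T₀ : ℝ, 0 < c₁ ∧ c₁ ≤ c₂ ∧ 0 < T₀ ∧ ∀ T, T₀ ≤ T →
      c₁ / T
          ≤ kerNormSq (contr01 (psiKer γ T) (hKer γ T))
              + kerNormSq (contr10 (psiKer γ T) (hKer γ T))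
        ∧ kerNormSq (contr01 (psiKer γ T) (hKer γ T))
              + kerNormSq (contr10 (psiKer γ T) (hKer γ T))
          ≤ c₂ / T := by
  set κ := ((rexp (-γ.re) - rexp (-(3 * γ.re))) / (2 * γ.re)) ^ 2
  have hκ : 0 < κ :=
    pow_pos (div_pos (sub_pos.mpr (exp_lt_exp.mpr (by linarith))) (by positivity)) 2
  refine ⟨min (κ / 2) (1 / (2 * γ.re ^ 3)), 1 / (2 * γ.re ^ 3), 4,
    lt_min (by positivity) (by positivity), min_le_right _ _, four_pos, fun T hT => ?_⟩
  have hT0 : 0 < T := by linarith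
  constructor
  · calc min (κ / 2) (1 / (2 * γ.re ^ 3)) / T ≤ κ / (2 * T) :=
          (div_le_div_of_nonneg_right (min_le_left _ _) hT0.le).trans_eq (div_div _ _ _)
      _ ≤ _ := le_add_of_le_of_nonneg (le_kerNormSq_contr01_psiKer_hKer hγ hT)
          (kerNormSq_nonneg _)
  · calc _ ≤ 1 / (4 * γ.re ^ 3 * T) + 1 / (4 * γ.re ^ 3 * T) :=
          add_le_add (kerNormSq_contr01_psiKer_hKer_le hγ hT0)
            (kerNormSq_contr10_psiKer_hKer_le hγ hT0)
      _ = 1 / (2 * γ.re ^ 3) / T := by field_simp; ring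
end

section
/- For every z, λ ∈ ℂ, the family ((conj(λ))^p · λ^q / (p! · q!)) · H_{p,q}(z), indexed by (p, q) ∈ ℕ², is absolutely summable and its sum equals exp(λ·conj(z) + conj(λ)·z − 2|λ|²), where H_{p,q}(z) := Σ_{k=0}^{min(p,q)} (−2)^k · k! · C(p,k) · C(q,k) · z^{p−k} · conj(z)^{q−k}. In particular H_{1,1}(z) = |z|² − 2, H_{1,2}(z) = conj(z)(|z|² − 4), and H_{2,2}(z) = |z|⁴ − 8|z|² + 8. -/
/-!
Multiply the three exponential series of `exp (s z)`, `exp (t conj z)` and `exp (-2 s t)`.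
The resulting triple series, indexed by `((a, b), k)`, converges absolutely; regrouping it along
`p = a + k`, `q = b + k` turns the `((a, b), k)`-term into
`s ^ p t ^ q / (p! q!) * (-2) ^ k k! C(p,k) C(q,k) z ^ (p - k) conj z ^ (q - k)`,
so the inner sum over `k` is `s ^ p t ^ q / (p! q!) * H_{p,q}(z)`. Take `s = conj λ`, `t = λ`.
-/

/-- The complex Hermite (Hermite–Laguerre–Itô) polynomial
`H_{p,q}(z) = Σ_{k=0}^{min(p,q)} (−2)^k k! C(p,k) C(q,k) z^{p−k} conj(z)^{q−k}`. -/
noncomputable def complexHermite (p q : ℕ) (z : ℂ) : ℂ :=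
  ∑ k ∈ Finset.range (min p q + 1),
    (-2 : ℂ) ^ k * (k.factorial : ℂ) * (p.choose k : ℂ) * (q.choose k : ℂ)
      * z ^ (p - k) * (starRingEnd ℂ z) ^ (q - k)

open scoped Nat

lemma Complex.hasSum_pow_div_factorial (y : ℂ) :
    HasSum (fun n : ℕ => y ^ n / (n ! : ℂ)) (Complex.exp y) := by
  rw [Complex.exp_eq_exp_ℂ]
  exact NormedSpace.expSeries_div_hasSum_exp y

lemma Complex.summable_norm_pow_div_factorial_mul (u v : ℂ) :
    Summable fun x : ℕ × ℕ => ‖u ^ x.1 / (x.1 ! : ℂ) * (v ^ x.2 / (x.2 ! : ℂ))‖ :=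
  Summable.mul_norm (f := fun n : ℕ => u ^ n / (n ! : ℂ)) (g := fun n : ℕ => v ^ n / (n ! : ℂ))
    (NormedSpace.norm_expSeries_div_summable u) (NormedSpace.norm_expSeries_div_summable v)

lemma Complex.summable_norm_pow_div_factorial_mul_three (u v w : ℂ) :
    Summable fun x : (ℕ × ℕ) × ℕ =>
      ‖u ^ x.1.1 / (x.1.1 ! : ℂ) * (v ^ x.1.2 / (x.1.2 ! : ℂ)) * (w ^ x.2 / (x.2 ! : ℂ))‖ :=
  Summable.mul_norm (f := fun x : ℕ × ℕ => u ^ x.1 / (x.1 ! : ℂ) * (v ^ x.2 / (x.2 ! : ℂ)))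
    (g := fun n : ℕ => w ^ n / (n ! : ℂ))
    (summable_norm_pow_div_factorial_mul u v) (NormedSpace.norm_expSeries_div_summable w)

lemma Complex.hasSum_pow_div_factorial_mul_three (u v w : ℂ) :
    HasSum (fun x : (ℕ × ℕ) × ℕ =>
      u ^ x.1.1 / (x.1.1 ! : ℂ) * (v ^ x.1.2 / (x.1.2 ! : ℂ)) * (w ^ x.2 / (x.2 ! : ℂ)))
      (Complex.exp (u + v + w)) := by
  have hu := Complex.hasSum_pow_div_factorial u
  have hv := Complex.hasSum_pow_div_factorial v
  have hw := Complex.hasSum_pow_div_factorial w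
  rw [Complex.exp_add, Complex.exp_add]
  have huv := hu.mul hv (Complex.summable_norm_pow_div_factorial_mul u v).of_norm
  have huvw := huv.mul hw (Complex.summable_norm_pow_div_factorial_mul_three u v w).of_norm
  exact huvw

namespace complexHermite

noncomputable def term (p q : ℕ) (z : ℂ) (k : ℕ) : ℂ :=
  (-2 : ℂ) ^ k * (k ! : ℂ) * (p.choose k : ℂ) * (q.choose k : ℂ)
    * z ^ (p - k) * (starRingEnd ℂ z) ^ (q - k)

lemma term_eq_zero_of_lt {p q k : ℕ} (z : ℂ) (hk : min p q < k) : term p q z k = 0 := by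
  rcases min_lt_iff.mp hk with h | h <;> simp [term, Nat.choose_eq_zero_of_lt h]

lemma hasSum_term (p q : ℕ) (z : ℂ) : HasSum (term p q z) (complexHermite p q z) :=
  hasSum_sum_of_ne_finset_zero fun k hk =>
    term_eq_zero_of_lt z (by rw [Finset.mem_range] at hk; omega)


noncomputable def tripleTerm (s t z : ℂ) (x : (ℕ × ℕ) × ℕ) : ℂ :=
  s ^ x.1.1 * t ^ x.1.2 / ((x.1.1 ! : ℂ) * (x.1.2 ! : ℂ)) * term x.1.1 x.1.2 z x.2

def shiftDiag (x : (ℕ × ℕ) × ℕ) : (ℕ × ℕ) × ℕ := ((x.1.1 + x.2, x.1.2 + x.2), x.2)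

lemma shiftDiag_injective : Function.Injective shiftDiag := by
  rintro ⟨⟨a, b⟩, k⟩ ⟨⟨a', b'⟩, k'⟩ h
  simp only [shiftDiag, Prod.mk.injEq] at h ⊢
  omega

lemma tripleTerm_eq_zero_of_notMem_range {s t z : ℂ} {x : (ℕ × ℕ) × ℕ}
    (hx : x ∉ Set.range shiftDiag) : tripleTerm s t z x = 0 := by
  obtain ⟨⟨p, q⟩, k⟩ := x
  have hk : min p q < k := by
    by_contra! h
    exact hx ⟨((p - k, q - k), k), by simp only [shiftDiag]; grind⟩
  simp [tripleTerm, term_eq_zero_of_lt z hk]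

lemma tripleTerm_shiftDiag (s t z : ℂ) (a b k : ℕ) :
    tripleTerm s t z (shiftDiag ((a, b), k))
      = (s * z) ^ a / a ! * ((t * starRingEnd ℂ z) ^ b / b !) * ((-2 * s * t) ^ k / k !) := by
  have hfact (n : ℕ) : (((n + k) ! : ℕ) : ℂ) = ((n + k).choose k : ℂ) * (k ! : ℂ) * (n ! : ℂ) := by
    rw [← Nat.choose_mul_factorial_mul_factorial (Nat.le_add_left k n), Nat.add_sub_cancel]
    push_cast
    ring
  have hchoose (n : ℕ) : ((n + k).choose k : ℂ) ≠ 0 := by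
    exact_mod_cast (Nat.choose_pos (Nat.le_add_left k n)).ne'
  simp only [tripleTerm, shiftDiag, term, Nat.add_sub_cancel]
  rw [hfact a, hfact b]
  field_simp [hchoose a, hchoose b]
  ring

lemma hasSum_tripleTerm (s t z : ℂ) :
    HasSum (tripleTerm s t z) (Complex.exp (s * z + t * starRingEnd ℂ z - 2 * s * t)) := by
  rw [← shiftDiag_injective.hasSum_iff fun x hx => tripleTerm_eq_zero_of_notMem_range hx,
    sub_eq_add_neg, ← neg_mul, ← neg_mul]
  have h := Complex.hasSum_pow_div_factorial_mul_three (s * z) (t * starRingEnd ℂ z) (-2 * s * t)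
  exact h.congr_fun fun ⟨⟨a, b⟩, k⟩ => tripleTerm_shiftDiag s t z a b k

lemma summable_norm_tripleTerm (s t z : ℂ) : Summable fun x => ‖tripleTerm s t z x‖ := by
  rw [← shiftDiag_injective.summable_iff fun x hx => by
    simp [tripleTerm_eq_zero_of_notMem_range hx]]
  have h := Complex.summable_norm_pow_div_factorial_mul_three (s * z) (t * starRingEnd ℂ z)
    (-2 * s * t)
  exact h.congr fun ⟨⟨a, b⟩, k⟩ => by rw [Function.comp_apply, tripleTerm_shiftDiag]

lemma hasSum_tripleTerm_fiber (s t z : ℂ) (pq : ℕ × ℕ) :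
    HasSum (fun k => tripleTerm s t z (pq, k))
      (s ^ pq.1 * t ^ pq.2 / ((pq.1 ! : ℂ) * (pq.2 ! : ℂ)) * complexHermite pq.1 pq.2 z) := by
  have h := (hasSum_term pq.1 pq.2 z).mul_left (s ^ pq.1 * t ^ pq.2 / ((pq.1 ! : ℂ) * (pq.2 ! : ℂ)))
  exact h

theorem hasSum_generatingFunction (s t z : ℂ) :
    HasSum (fun pq : ℕ × ℕ => s ^ pq.1 * t ^ pq.2 / ((pq.1 ! : ℂ) * (pq.2 ! : ℂ))
        * complexHermite pq.1 pq.2 z)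
      (Complex.exp (s * z + t * starRingEnd ℂ z - 2 * s * t)) :=
  (hasSum_tripleTerm s t z).prod_fiberwise (hasSum_tripleTerm_fiber s t z)

theorem summable_norm_generatingFunction (s t z : ℂ) :
    Summable fun pq : ℕ × ℕ => ‖s ^ pq.1 * t ^ pq.2 / ((pq.1 ! : ℂ) * (pq.2 ! : ℂ))
        * complexHermite pq.1 pq.2 z‖ := by
  have hnorm := summable_norm_tripleTerm s t z
  refine hnorm.prod.of_nonneg_of_le (fun _ => norm_nonneg _) fun pq => ?_
  rw [← (hasSum_tripleTerm_fiber s t z pq).tsum_eq]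
  exact norm_tsum_le_tsum_norm (hnorm.prod_factor pq)

end complexHermite

lemma complexHermite_one_one (z : ℂ) : complexHermite 1 1 z = ((‖z‖ : ℝ) : ℂ) ^ 2 - 2 := by
  rw [← Complex.mul_conj']
  simp [complexHermite, Finset.sum_range_succ]
  ring

lemma complexHermite_one_two (z : ℂ) :
    complexHermite 1 2 z = starRingEnd ℂ z * (((‖z‖ : ℝ) : ℂ) ^ 2 - 4) := by
  rw [← Complex.mul_conj']
  simp [complexHermite, Finset.sum_range_succ]
  ring

lemma complexHermite_two_two (z : ℂ) :
    complexHermite 2 2 z = ((‖z‖ : ℝ) : ℂ) ^ 4 - 8 * ((‖z‖ : ℝ) : ℂ) ^ 2 + 8 := by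
  rw [show ((‖z‖ : ℝ) : ℂ) ^ 4 = (((‖z‖ : ℝ) : ℂ) ^ 2) ^ 2 by ring, ← Complex.mul_conj']
  simp [complexHermite, Finset.sum_range_succ]
  ring

/-- For every `z, λ ∈ ℂ`, the family
`(conj(λ)^p λ^q / (p! q!)) H_{p,q}(z)`, indexed by `(p, q) ∈ ℕ²`, is absolutely summable and
its sum equals `exp(λ conj(z) + conj(λ) z − 2|λ|²)`.  In particular,
`H_{1,1}(z) = |z|² − 2`, `H_{1,2}(z) = conj(z)(|z|² − 4)` and
`H_{2,2}(z) = |z|⁴ − 8|z|² + 8`. -/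
theorem complexHermite_generating_function (z lam : ℂ) :
    Summable (fun pq : ℕ × ℕ =>
        ‖(starRingEnd ℂ lam) ^ pq.1 * lam ^ pq.2
            / ((pq.1.factorial : ℂ) * (pq.2.factorial : ℂ)) * complexHermite pq.1 pq.2 z‖)
      ∧ (∑' pq : ℕ × ℕ, (starRingEnd ℂ lam) ^ pq.1 * lam ^ pq.2
            / ((pq.1.factorial : ℂ) * (pq.2.factorial : ℂ)) * complexHermite pq.1 pq.2 z)
          = Complex.exp (lam * starRingEnd ℂ z + starRingEnd ℂ lam * z
              - 2 * ((‖lam‖ : ℝ) : ℂ) ^ 2)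
      ∧ complexHermite 1 1 z = ((‖z‖ : ℝ) : ℂ) ^ 2 - 2
      ∧ complexHermite 1 2 z = starRingEnd ℂ z * (((‖z‖ : ℝ) : ℂ) ^ 2 - 4)
      ∧ complexHermite 2 2 z
          = ((‖z‖ : ℝ) : ℂ) ^ 4 - 8 * ((‖z‖ : ℝ) : ℂ) ^ 2 + 8 := by
  have hexponent : lam * starRingEnd ℂ z + starRingEnd ℂ lam * z - 2 * ((‖lam‖ : ℝ) : ℂ) ^ 2
      = starRingEnd ℂ lam * z + lam * starRingEnd ℂ z - 2 * starRingEnd ℂ lam * lam := by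
    rw [← Complex.conj_mul']
    ring
  refine ⟨complexHermite.summable_norm_generatingFunction _ _ z, ?_, complexHermite_one_one z,
    complexHermite_one_two z, complexHermite_two_two z⟩
  rw [hexponent]
  exact (complexHermite.hasSum_generatingFunction _ _ z).tsum_eq
end
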